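/- (Di Nola's representation theorem) Every MV-algebra M can be embedded into a product of ultrapowers of the standard MV-algebra [0,1]: there exist an index set J and, for each j ∈ J, an index set I_j and an ultrafilter U_j on I_j, together with an injective MV-homomorphism from M into the direct product ∏_{j∈J} (([0,1]^{I_j})/U_j). -/

import Mathlib

/-- An MV-algebra structure on a type `A`. -/
structure MVStr (A : Type*) where
  oplus : A → A → A
  neg : A → A
  zero : A
  oplus_comm : ∀ x y, oplus x y = oplus y x
  oplus_assoc : ∀ x y z, oplus x (oplus y z) = oplus (oplus x y) z
  oplus_zero : ∀ x, oplus x zero = x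
  neg_neg : ∀ x, neg (neg x) = x
  oplus_one : ∀ x, oplus x (neg zero) = neg zero
  mv6 : ∀ x y, oplus (neg (oplus (neg x) y)) y = oplus (neg (oplus (neg y) x)) x

namespace MVStr

variable {A : Type*}

/-- The top element `1 := ¬0`. -/
def one (s : MVStr A) : A := s.neg s.zero

/-- The MV-order: `x ≤ y` iff `¬x ⊕ y = 1`. -/
def le (s : MVStr A) (x y : A) : Prop := s.oplus (s.neg x) y = s.one

/-- An MV-algebra is linearly ordered if the MV-order is total. -/
def Linear (s : MVStr A) : Prop := ∀ x y, s.le x y ∨ s.le y x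

end MVStr

/-- `f : A → B` is an MV-homomorphism. -/
def IsMVHom {A B : Type*} (s : MVStr A) (t : MVStr B) (f : A → B) : Prop :=
  (∀ x y, f (s.oplus x y) = t.oplus (f x) (f y)) ∧
  (∀ x, f (s.neg x) = t.neg (f x)) ∧
  f s.zero = t.zero

/-- A partial-subalgebra embedding of the restriction of `s` to `X` into `t`. -/
def IsPartialMVEmbedding {A B : Type*} (s : MVStr A) (t : MVStr B) (X : Set A)
    (f : A → B) : Prop :=
  Set.InjOn f X ∧
  (s.zero ∈ X → f s.zero = t.zero) ∧
  (∀ x ∈ X, s.neg x ∈ X → f (s.neg x) = t.neg (f x)) ∧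
  (∀ x ∈ X, ∀ y ∈ X, s.oplus x y ∈ X → f (s.oplus x y) = t.oplus (f x) (f y))

/-- The direct product of MV-algebras, with componentwise operations. -/
def piMV {I : Type*} {A : I → Type*} (s : ∀ i, MVStr (A i)) : MVStr (∀ i, A i) where
  oplus x y := fun i => (s i).oplus (x i) (y i)
  neg x := fun i => (s i).neg (x i)
  zero := fun i => (s i).zero
  oplus_comm x y := funext fun i => (s i).oplus_comm _ _
  oplus_assoc x y z := funext fun i => (s i).oplus_assoc _ _ _
  oplus_zero x := funext fun i => (s i).oplus_zero _
  neg_neg x := funext fun i => (s i).neg_neg _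
  oplus_one x := funext fun i => (s i).oplus_one _
  mv6 x y := funext fun i => (s i).mv6 _ _

/-- The setoid identifying two elements of a direct product when they agree on a
set belonging to the ultrafilter `U`. -/
def mvSetoid {I : Type*} (A : I → Type*) (U : Ultrafilter I) : Setoid (∀ i, A i) where
  r x y := {i | x i = y i} ∈ (U : Filter I)
  iseqv := by
    refine ⟨fun x => ?_, fun {x y} h => ?_, fun {x y z} h1 h2 => ?_⟩
    · have : {i | x i = x i} = Set.univ := Set.eq_univ_of_forall fun i => rfl
      rw [this]; exact Filter.univ_mem
    · have : {i | x i = y i} ⊆ {i | y i = x i} := fun i hi => (hi : x i = y i).symm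
      exact Filter.mem_of_superset h this
    · refine Filter.mem_of_superset (Filter.inter_mem h1 h2) ?_
      rintro i ⟨hi1, hi2⟩
      exact (hi1 : x i = y i).trans hi2

/-- The carrier of the ultraproduct of the family `A` modulo the ultrafilter `U`. -/
def MVUltra {I : Type*} (A : I → Type*) (U : Ultrafilter I) : Type _ :=
  Quotient (mvSetoid A U)

/-- The ultraproduct of a family of MV-algebras modulo an ultrafilter `U`. -/
def ultraMV {I : Type*} {A : I → Type*} (s : ∀ i, MVStr (A i)) (U : Ultrafilter I) :
    MVStr (MVUltra A U) where
  oplus := Quotient.map₂ (fun x y => fun i => (s i).oplus (x i) (y i)) (by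
    intro a c hac b d hbd
    change {i | a i = c i} ∈ (U : Filter I) at hac
    change {i | b i = d i} ∈ (U : Filter I) at hbd
    refine Filter.mem_of_superset (Filter.inter_mem hac hbd) ?_
    rintro i ⟨hi1, hi2⟩
    show (s i).oplus (a i) (b i) = (s i).oplus (c i) (d i)
    rw [show a i = c i from hi1, show b i = d i from hi2])
  neg := Quotient.map (fun x => fun i => (s i).neg (x i)) (by
    intro a b hab
    change {i | a i = b i} ∈ (U : Filter I) at hab
    refine Filter.mem_of_superset hab ?_
    intro i hi
    show (s i).neg (a i) = (s i).neg (b i)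
    rw [show a i = b i from hi])
  zero := Quotient.mk (mvSetoid A U) (fun i => (s i).zero)
  oplus_comm := by
    intro x y
    refine Quotient.inductionOn₂ x y ?_
    intro a b
    simp only [Quotient.map_mk, Quotient.map₂_mk]
    exact congrArg _ (funext fun i => (s i).oplus_comm _ _)
  oplus_assoc := by
    intro x y z
    refine Quotient.inductionOn₃ x y z ?_
    intro a b c
    simp only [Quotient.map_mk, Quotient.map₂_mk]
    exact congrArg _ (funext fun i => (s i).oplus_assoc _ _ _)
  oplus_zero := by
    intro x
    refine Quotient.inductionOn x ?_
    intro a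
    simp only [Quotient.map_mk, Quotient.map₂_mk]
    exact congrArg _ (funext fun i => (s i).oplus_zero _)
  neg_neg := by
    intro x
    refine Quotient.inductionOn x ?_
    intro a
    simp only [Quotient.map_mk, Quotient.map₂_mk]
    exact congrArg _ (funext fun i => (s i).neg_neg _)
  oplus_one := by
    intro x
    refine Quotient.inductionOn x ?_
    intro a
    simp only [Quotient.map_mk, Quotient.map₂_mk]
    exact congrArg _ (funext fun i => (s i).oplus_one _)
  mv6 := by
    intro x y
    refine Quotient.inductionOn₂ x y ?_
    intro a b
    simp only [Quotient.map_mk, Quotient.map₂_mk]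
    exact congrArg _ (funext fun i => (s i).mv6 _ _)

/-- The MV-algebra structure on a suitable subset of a linearly ordered field,
with `x ⊕ y = min (x + y) 1` and `¬x = 1 - x`. -/
def subMV {K : Type*} [Field K] [LinearOrder K] [IsStrictOrderedRing K] (S : Set K)
    (hsub : ∀ x ∈ S, 0 ≤ x ∧ x ≤ 1)
    (h0 : (0 : K) ∈ S)
    (hneg : ∀ x ∈ S, 1 - x ∈ S)
    (hop : ∀ x ∈ S, ∀ y ∈ S, min (x + y) 1 ∈ S) : MVStr S where
  oplus x y := ⟨min (x.1 + y.1) 1, hop _ x.2 _ y.2⟩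
  neg x := ⟨1 - x.1, hneg _ x.2⟩
  zero := ⟨0, h0⟩
  oplus_comm x y := Subtype.ext (by dsimp only; rw [add_comm])
  oplus_assoc x y z := Subtype.ext (by
    obtain ⟨hx0, hx1⟩ := hsub _ x.2
    obtain ⟨hy0, hy1⟩ := hsub _ y.2
    obtain ⟨hz0, hz1⟩ := hsub _ z.2
    dsimp only
    simp only [min_def]
    split_ifs <;> linarith)
  oplus_zero x := Subtype.ext (by
    obtain ⟨hx0, hx1⟩ := hsub _ x.2
    dsimp only
    rw [add_zero, min_eq_left hx1])
  neg_neg x := Subtype.ext (by dsimp only; ring)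
  oplus_one x := Subtype.ext (by
    obtain ⟨hx0, hx1⟩ := hsub _ x.2
    dsimp only
    rw [sub_zero, min_eq_right (by linarith)])
  mv6 x y := Subtype.ext (by
    obtain ⟨hx0, hx1⟩ := hsub _ x.2
    obtain ⟨hy0, hy1⟩ := hsub _ y.2
    dsimp only
    simp only [min_def]
    split_ifs <;> linarith)

/-- The standard MV-algebra on the real interval `[0,1]`. -/
noncomputable def stdMV : MVStr (Set.Icc (0 : ℝ) 1) :=
  subMV _ (fun _ hx => ⟨hx.1, hx.2⟩) ⟨le_refl 0, zero_le_one⟩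
    (fun x hx => ⟨by linarith [hx.2], by linarith [hx.1]⟩)
    (fun x hx y hy => ⟨le_min (add_nonneg hx.1 hy.1) zero_le_one, min_le_right _ _⟩)

/-- The rational standard MV-algebra on `ℚ ∩ [0,1]`. -/
def ratMV : MVStr (Set.Icc (0 : ℚ) 1) :=
  subMV _ (fun _ hx => ⟨hx.1, hx.2⟩) ⟨le_refl 0, zero_le_one⟩
    (fun x hx => ⟨by linarith [hx.2], by linarith [hx.1]⟩)
    (fun x hx y hy => ⟨le_min (add_nonneg hx.1 hy.1) zero_le_one, min_le_right _ _⟩)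

/-- The carrier `{0, 1/k, 2/k, …, 1}` of the finite MV-chain `Ł_k`. -/
def Lset (k : ℕ) : Set ℚ := {q | ∃ i : ℕ, i ≤ k ∧ q = (i : ℚ) / k}

/-- The finite MV-chain `Ł_k` on `{0, 1/k, 2/k, …, 1}` (for `k ≥ 1`). -/
def LMV (k : ℕ) (hk : 1 ≤ k) : MVStr (Lset k) := by
  have hk0 : (0 : ℚ) < (k : ℚ) := by exact_mod_cast hk
  refine subMV _ ?_ ?_ ?_ ?_
  · rintro x ⟨i, hik, rfl⟩
    exact ⟨div_nonneg (by positivity) hk0.le, (div_le_one hk0).2 (by exact_mod_cast hik)⟩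
  · exact ⟨0, Nat.zero_le _, by simp⟩
  · rintro x ⟨i, hik, rfl⟩
    refine ⟨k - i, Nat.sub_le _ _, ?_⟩
    rw [Nat.cast_sub hik]
    field_simp
  · rintro x ⟨i, hik, rfl⟩ y ⟨j, hjk, rfl⟩
    refine ⟨min (i + j) k, min_le_right _ _, ?_⟩
    rw [← add_div]
    rcases le_total (i + j) k with h | h
    · rw [min_eq_left h, min_eq_left ((div_le_one hk0).2 (by exact_mod_cast h))]
      push_cast
      ring
    · rw [min_eq_right h, min_eq_right ((one_le_div hk0).2 (by exact_mod_cast h))]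
      field_simp

/-- `U` is an `α`-regular (ultra)filter. -/
def IsRegularUltrafilter {I : Type*} (α : Cardinal) (U : Ultrafilter I) : Prop :=
  ∃ E : Set (Set I), (∀ e ∈ E, e ∈ (U : Filter I)) ∧ Cardinal.mk E = α ∧
    ∀ i : I, {e : E | i ∈ (e : Set I)}.Finite


/-!
Two distinct elements of an MV-algebra are separated by a quotient by a prime ideal, which is
a nontrivial MV-chain (Chang). Such a chain is the unit interval of its Chang group, a linearly
ordered abelian group, and by the Hahn embedding theorem any finitely many positive elements
of that group stay positive under some additive map to `ℝ`. Normalising this map so that `1`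
goes to `1` embeds any finite part of the chain into `[0,1]`, preserving the instances of `⊕`
and `¬` that stay inside it. Along an ultrafilter on the finite subsets of the algebra that
refines `atTop`, these partial embeddings glue to a homomorphism into an ultrapower of `[0,1]`
separating the two elements; the product over all pairs of distinct elements is injective.
-/

universe u

namespace MVStr

variable {A : Type*} (s : MVStr A)

def ominus (x y : A) : A := s.neg (s.oplus (s.neg x) y)

def odot (x y : A) : A := s.neg (s.oplus (s.neg x) (s.neg y))

def sup (x y : A) : A := s.oplus (s.ominus x y) y

def inf (x y : A) : A := s.neg (s.sup (s.neg x) (s.neg y))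

def dist (x y : A) : A := s.oplus (s.ominus x y) (s.ominus y x)

def nsmul : ℕ → A → A
  | 0, _ => s.zero
  | n + 1, a => s.oplus a (nsmul n a)

lemma neg_inj {x y : A} (h : s.neg x = s.neg y) : x = y := by
  rw [← s.neg_neg x, h, s.neg_neg]

lemma neg_one : s.neg s.one = s.zero := s.neg_neg s.zero

lemma oplus_one' (x : A) : s.oplus x s.one = s.one := s.oplus_one x

lemma one_oplus (x : A) : s.oplus s.one x = s.one := by
  rw [s.oplus_comm]; exact s.oplus_one x

lemma zero_oplus (x : A) : s.oplus s.zero x = x := by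
  rw [s.oplus_comm]; exact s.oplus_zero x

lemma neg_oplus_self (x : A) : s.oplus (s.neg x) x = s.one := by
  have h := s.mv6 x s.one
  rwa [s.oplus_one', s.neg_one, s.zero_oplus, eq_comm] at h

lemma oplus_neg_self (x : A) : s.oplus x (s.neg x) = s.one := by
  rw [s.oplus_comm]; exact s.neg_oplus_self x

lemma oplus_oplus_oplus_comm (a b c d : A) :
    s.oplus (s.oplus a b) (s.oplus c d) = s.oplus (s.oplus a c) (s.oplus b d) := by
  rw [← s.oplus_assoc a b, s.oplus_assoc b c d, s.oplus_comm b c, ← s.oplus_assoc c b d,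
    s.oplus_assoc a c]

lemma le_refl (x : A) : s.le x x := s.neg_oplus_self x

lemma zero_le (x : A) : s.le s.zero x := s.one_oplus x

lemma le_one (x : A) : s.le x s.one := s.oplus_one' (s.neg x)

lemma le_antisymm {x y : A} (h₁ : s.le x y) (h₂ : s.le y x) : x = y := by
  have h := s.mv6 x y
  rwa [h₁, h₂, s.neg_one, s.zero_oplus, s.zero_oplus, eq_comm] at h

lemma sup_comm (x y : A) : s.sup x y = s.sup y x := s.mv6 x y

lemma sup_of_le_right {x y : A} (h : s.le x y) : s.sup x y = y := by
  change s.oplus (s.neg (s.oplus (s.neg x) y)) y = y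
  rw [h, s.neg_one, s.zero_oplus]

lemma sup_of_le_left {x y : A} (h : s.le y x) : s.sup x y = x := by
  rw [s.sup_comm]; exact s.sup_of_le_right h

lemma le_trans {x y z : A} (h₁ : s.le x y) (h₂ : s.le y z) : s.le x z := by
  have hz : s.oplus (s.ominus z y) y = z := s.sup_of_le_left h₂
  change s.oplus (s.neg x) z = s.one
  rw [← hz, s.oplus_comm _ y, s.oplus_assoc, h₁, s.one_oplus]

lemma le_oplus_left (x y : A) : s.le x (s.oplus x y) := by
  change s.oplus (s.neg x) (s.oplus x y) = s.one
  rw [s.oplus_assoc, s.neg_oplus_self, s.one_oplus]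

lemma le_oplus_right (x y : A) : s.le x (s.oplus y x) := by
  rw [s.oplus_comm]; exact s.le_oplus_left x y

lemma oplus_le_oplus_left {x y : A} (h : s.le x y) (z : A) :
    s.le (s.oplus x z) (s.oplus y z) := by
  have hy : s.oplus (s.ominus y x) x = y := s.sup_of_le_left h
  change s.oplus (s.neg (s.oplus x z)) (s.oplus y z) = s.one
  rw [← hy, ← s.oplus_assoc, s.oplus_comm, ← s.oplus_assoc, s.oplus_neg_self, s.oplus_one']

lemma oplus_le_oplus_right {x y : A} (h : s.le x y) (z : A) :
    s.le (s.oplus z x) (s.oplus z y) := by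
  rw [s.oplus_comm z x, s.oplus_comm z y]; exact s.oplus_le_oplus_left h z

lemma oplus_le_oplus {a a' b b' : A} (ha : s.le a a') (hb : s.le b b') :
    s.le (s.oplus a b) (s.oplus a' b') :=
  s.le_trans (s.oplus_le_oplus_left ha b) (s.oplus_le_oplus_right hb a')

lemma neg_le_neg {x y : A} (h : s.le x y) : s.le (s.neg y) (s.neg x) := by
  change s.oplus (s.neg (s.neg y)) (s.neg x) = s.one
  rwa [s.neg_neg, s.oplus_comm]

lemma ominus_eq_zero_iff {x y : A} : s.ominus x y = s.zero ↔ s.le x y := by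
  refine ⟨fun h => ?_, fun h => ?_⟩
  · rw [MVStr.le, ← s.neg_neg (s.oplus (s.neg x) y)]
    exact congrArg s.neg h
  · change s.neg (s.oplus (s.neg x) y) = s.zero
    rw [h, s.neg_one]

lemma ominus_self (x : A) : s.ominus x x = s.zero := s.ominus_eq_zero_iff.mpr (s.le_refl x)

lemma ominus_one (x : A) : s.ominus x s.one = s.zero := s.ominus_eq_zero_iff.mpr (s.le_one x)

lemma one_ominus (x : A) : s.ominus s.one x = s.neg x := by
  change s.neg (s.oplus (s.neg s.one) x) = s.neg x
  rw [s.neg_one, s.zero_oplus]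

lemma le_sup_right (x y : A) : s.le y (s.sup x y) := s.le_oplus_right y (s.ominus x y)

lemma le_sup_left (x y : A) : s.le x (s.sup x y) := by
  rw [s.sup_comm]; exact s.le_sup_right y x

lemma ominus_le_ominus_left {x x' : A} (h : s.le x x') (y : A) :
    s.le (s.ominus x y) (s.ominus x' y) :=
  s.neg_le_neg (s.oplus_le_oplus_left (s.neg_le_neg h) y)

lemma sup_le {x y z : A} (hx : s.le x z) (hy : s.le y z) : s.le (s.sup x y) z := by
  have h : s.le (s.sup x y) (s.sup z y) := s.oplus_le_oplus_left (s.ominus_le_ominus_left hx y) y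
  rwa [s.sup_of_le_left hy] at h

lemma ominus_le_iff {x y z : A} : s.le (s.ominus x y) z ↔ s.le x (s.oplus y z) := by
  refine ⟨fun h => ?_, fun h => s.le_trans (s.ominus_le_ominus_left h y) ?_⟩
  · rw [s.oplus_comm]
    exact s.le_trans (s.le_sup_left x y) (s.oplus_le_oplus_left h y)
  · change s.oplus (s.neg (s.neg (s.oplus (s.neg (s.oplus y z)) y))) z = s.one
    rw [s.neg_neg, ← s.oplus_assoc, s.neg_oplus_self]

lemma inf_comm (x y : A) : s.inf x y = s.inf y x := congrArg s.neg (s.sup_comm _ _)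

lemma inf_le_left (x y : A) : s.le (s.inf x y) x := by
  have h := s.neg_le_neg (s.le_sup_left (s.neg x) (s.neg y))
  rwa [s.neg_neg] at h

lemma inf_le_right (x y : A) : s.le (s.inf x y) y := by
  have h := s.neg_le_neg (s.le_sup_right (s.neg x) (s.neg y))
  rwa [s.neg_neg] at h

lemma le_inf {x y z : A} (h₁ : s.le z x) (h₂ : s.le z y) : s.le z (s.inf x y) := by
  have h := s.neg_le_neg (s.sup_le (s.neg_le_neg h₁) (s.neg_le_neg h₂))
  rwa [s.neg_neg] at h

lemma inf_of_le_left {x y : A} (h : s.le x y) : s.inf x y = x :=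
  s.le_antisymm (s.inf_le_left x y) (s.le_inf (s.le_refl x) h)

lemma inf_eq_ominus (x y : A) : s.inf x y = s.ominus y (s.ominus y x) := by
  change s.neg (s.oplus (s.neg (s.oplus (s.neg (s.neg x)) (s.neg y))) (s.neg y)) = _
  rw [s.neg_neg x, s.oplus_comm x (s.neg y), s.oplus_comm _ (s.neg y)]
  rfl

lemma oplus_inf (x y z : A) : s.oplus x (s.inf y z) = s.inf (s.oplus x y) (s.oplus x z) := by
  refine s.le_antisymm (s.le_inf (s.oplus_le_oplus_right (s.inf_le_left y z) x)
    (s.oplus_le_oplus_right (s.inf_le_right y z) x)) ?_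
  set w := s.inf (s.oplus x y) (s.oplus x z)
  have hy : s.le (s.ominus w x) y := s.ominus_le_iff.mpr (s.inf_le_left _ _)
  have hz : s.le (s.ominus w x) z := s.ominus_le_iff.mpr (s.inf_le_right _ _)
  exact s.le_trans (s.ominus_le_iff.mp (s.le_refl _)) (s.oplus_le_oplus_right (s.le_inf hy hz) x)

lemma ominus_oplus (x y : A) : s.ominus (s.oplus x y) x = s.inf y (s.neg x) := by
  set w := s.inf y (s.neg x)
  have hw : s.oplus x w = s.oplus x y := by
    rw [s.oplus_inf, s.oplus_neg_self, s.inf_of_le_left (s.le_one _)]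
  have h : s.ominus (s.oplus x w) x = s.ominus (s.neg x) (s.ominus (s.neg x) w) := by
    change s.neg (s.oplus (s.neg (s.oplus x w)) x) =
      s.neg (s.oplus (s.neg (s.neg x)) (s.neg (s.oplus (s.neg (s.neg x)) w)))
    rw [s.neg_neg, s.oplus_comm _ x]
  rw [← hw, h, ← s.inf_eq_ominus, s.inf_of_le_left (s.inf_le_right _ _)]

lemma sup_ominus (x y : A) : s.ominus (s.sup x y) y = s.ominus x y := by
  refine s.le_antisymm ?_ (s.ominus_le_ominus_left (s.le_sup_left x y) y)
  rw [MVStr.sup, s.oplus_comm, s.ominus_oplus]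
  exact s.inf_le_left _ _

lemma neg_oplus_ominus_of_le {x y : A} (h : s.le x y) :
    s.oplus (s.neg y) (s.ominus y x) = s.neg x := by
  have h' : s.neg (s.ominus y (s.ominus y x)) = s.neg x := by
    rw [← s.inf_eq_ominus, s.inf_of_le_left h]
  exact (s.neg_neg _).symm.trans h'

lemma ominus_ominus (x y : A) : s.ominus (s.ominus x y) (s.ominus y x) = s.ominus x y := by
  have hyx : s.ominus y x = s.ominus (s.sup x y) x := by rw [s.sup_comm, s.sup_ominus]
  conv_lhs => rw [← s.sup_ominus x y, hyx]
  change s.neg (s.oplus (s.neg (s.neg (s.oplus (s.neg (s.sup x y)) y)))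
    (s.ominus (s.sup x y) x)) = _
  rw [s.neg_neg, s.oplus_comm _ y, ← s.oplus_assoc,
    s.neg_oplus_ominus_of_le (s.le_sup_left x y), s.oplus_comm]
  rfl

lemma inf_ominus_ominus_self (x y : A) : s.inf (s.ominus x y) (s.ominus y x) = s.zero := by
  rw [s.inf_comm, s.inf_eq_ominus, s.ominus_ominus x y]
  exact s.ominus_self _

lemma inf_oplus_le (a p q : A) :
    s.le (s.inf a (s.oplus p q)) (s.oplus (s.inf a p) (s.inf a q)) := by
  rw [s.oplus_inf, s.oplus_comm (s.inf a p) a, s.oplus_comm (s.inf a p) q, s.oplus_inf a,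
    s.oplus_inf q]
  refine s.le_inf (s.le_inf ?_ ?_) (s.le_inf ?_ ?_)
  · exact s.le_trans (s.inf_le_left _ _) (s.le_oplus_left a a)
  · exact s.le_trans (s.inf_le_left _ _) (s.le_oplus_left a p)
  · exact s.le_trans (s.inf_le_left _ _) (s.le_oplus_right a q)
  · exact s.le_trans (s.inf_le_right _ _) (s.oplus_comm p q ▸ s.le_refl _)

lemma nsmul_zero (a : A) : s.nsmul 0 a = s.zero := rfl

lemma nsmul_succ (n : ℕ) (a : A) : s.nsmul (n + 1) a = s.oplus a (s.nsmul n a) := rfl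

lemma nsmul_add (m n : ℕ) (a : A) :
    s.nsmul (m + n) a = s.oplus (s.nsmul m a) (s.nsmul n a) := by
  induction m with
  | zero => rw [Nat.zero_add, s.nsmul_zero, s.zero_oplus]
  | succ k ih => rw [Nat.succ_add, s.nsmul_succ, ih, s.nsmul_succ, s.oplus_assoc]

lemma inf_nsmul_eq_zero {a b : A} (h : s.inf a b = s.zero) (n : ℕ) :
    s.inf a (s.nsmul n b) = s.zero := by
  induction n with
  | zero => exact s.le_antisymm (s.inf_le_right a _) (s.zero_le _)
  | succ k ih =>
    have h' := s.inf_oplus_le a b (s.nsmul k b)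
    rw [h, ih, s.oplus_zero] at h'
    exact s.le_antisymm h' (s.zero_le _)

lemma inf_nsmul_nsmul_eq_zero {a b : A} (h : s.inf a b = s.zero) (m n : ℕ) :
    s.inf (s.nsmul m a) (s.nsmul n b) = s.zero := by
  rw [s.inf_comm]
  refine s.inf_nsmul_eq_zero ?_ m
  rw [s.inf_comm]
  exact s.inf_nsmul_eq_zero h n

lemma ominus_triangle (x y z : A) :
    s.le (s.ominus x z) (s.oplus (s.ominus x y) (s.ominus y z)) := by
  refine s.ominus_le_iff.mpr (s.le_trans (s.le_sup_left x y) ?_)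
  have h := s.oplus_le_oplus_right (s.le_sup_left y z) (s.ominus x y)
  rwa [MVStr.sup, s.oplus_assoc, s.oplus_comm _ z] at h

lemma ominus_oplus_le (x y u : A) : s.le (s.ominus (s.oplus x u) (s.oplus y u)) (s.ominus x y) := by
  refine s.ominus_le_iff.mpr (s.le_trans (s.oplus_le_oplus_left (s.le_sup_left x y) u) ?_)
  rw [MVStr.sup, ← s.oplus_assoc, s.oplus_comm (s.ominus x y)]
  exact s.le_refl _

lemma dist_self (x : A) : s.dist x x = s.zero := by
  rw [MVStr.dist, s.ominus_self, s.oplus_zero]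

lemma dist_comm (x y : A) : s.dist x y = s.dist y x := s.oplus_comm _ _

lemma eq_of_dist_eq_zero {x y : A} (h : s.dist x y = s.zero) : x = y := by
  have hxy := s.le_oplus_left (s.ominus x y) (s.ominus y x)
  have hyx := s.le_oplus_right (s.ominus y x) (s.ominus x y)
  rw [← MVStr.dist, h] at hxy hyx
  exact s.le_antisymm (s.ominus_eq_zero_iff.mp (s.le_antisymm hxy (s.zero_le _)))
    (s.ominus_eq_zero_iff.mp (s.le_antisymm hyx (s.zero_le _)))

lemma dist_triangle (x y z : A) : s.le (s.dist x z) (s.oplus (s.dist x y) (s.dist y z)) := by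
  have hzx := s.ominus_triangle z y x
  rw [s.oplus_comm] at hzx
  have h := s.oplus_le_oplus (s.ominus_triangle x y z) hzx
  rwa [s.oplus_oplus_oplus_comm] at h

lemma dist_oplus_le (x y u : A) : s.le (s.dist (s.oplus x u) (s.oplus y u)) (s.dist x y) :=
  s.oplus_le_oplus (s.ominus_oplus_le x y u) (s.ominus_oplus_le y x u)

lemma ominus_neg_neg (x y : A) : s.ominus (s.neg x) (s.neg y) = s.ominus y x := by
  change s.neg (s.oplus (s.neg (s.neg x)) (s.neg y)) = s.neg (s.oplus (s.neg y) x)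
  rw [s.neg_neg, s.oplus_comm]

lemma dist_neg (x y : A) : s.dist (s.neg x) (s.neg y) = s.dist x y := by
  rw [MVStr.dist, s.ominus_neg_neg, s.ominus_neg_neg, s.oplus_comm]
  rfl

lemma dist_one (x : A) : s.dist x s.one = s.neg x := by
  rw [MVStr.dist, s.ominus_one, s.one_ominus, s.zero_oplus]

lemma odot_comm (x y : A) : s.odot x y = s.odot y x := congrArg s.neg (s.oplus_comm _ _)

lemma neg_odot (x y : A) : s.neg (s.odot x y) = s.oplus (s.neg x) (s.neg y) := s.neg_neg _

lemma odot_neg_neg (x y : A) : s.odot (s.neg x) (s.neg y) = s.neg (s.oplus x y) := by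
  show s.neg (s.oplus (s.neg (s.neg x)) (s.neg (s.neg y))) = _
  rw [s.neg_neg, s.neg_neg]

lemma odot_assoc (x y z : A) : s.odot (s.odot x y) z = s.odot x (s.odot y z) := by
  show s.neg (s.oplus (s.neg (s.odot x y)) (s.neg z)) =
    s.neg (s.oplus (s.neg x) (s.neg (s.odot y z)))
  rw [s.neg_odot, s.neg_odot, ← s.oplus_assoc]

lemma odot_eq_ominus (x y : A) : s.odot x y = s.ominus x (s.neg y) := rfl

lemma odot_le_left (x y : A) : s.le (s.odot x y) x := by
  show s.oplus (s.neg (s.odot x y)) x = s.one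
  rw [s.neg_odot, s.oplus_comm (s.neg x) (s.neg y), ← s.oplus_assoc, s.neg_oplus_self,
    s.oplus_one']

lemma odot_ne_one {x : A} (hx : x ≠ s.one) (y : A) : s.odot x y ≠ s.one := fun h =>
  hx (s.le_antisymm (s.le_one _) (h ▸ s.odot_le_left x y))

lemma odot_le_right (x y : A) : s.le (s.odot x y) y := by
  rw [s.odot_comm]; exact s.odot_le_left y x

lemma odot_le_odot_right {y y' : A} (h : s.le y y') (x : A) :
    s.le (s.odot x y) (s.odot x y') :=
  s.neg_le_neg (s.oplus_le_oplus_right (s.neg_le_neg h) (s.neg x))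

lemma odot_one (x : A) : s.odot x s.one = x := by
  show s.neg (s.oplus (s.neg x) (s.neg s.one)) = x
  rw [s.neg_one, s.oplus_zero, s.neg_neg]

lemma one_odot (x : A) : s.odot s.one x = x := by rw [s.odot_comm]; exact s.odot_one x

lemma odot_neg_self (x : A) : s.odot x (s.neg x) = s.zero := by
  show s.neg (s.oplus (s.neg x) (s.neg (s.neg x))) = s.zero
  rw [s.oplus_neg_self, s.neg_one]

lemma odot_inf (p q : A) : s.odot p (s.oplus (s.neg p) q) = s.inf q p := by
  rw [s.inf_eq_ominus]; rfl

lemma oplus_eq_one_iff {x y : A} : s.oplus x y = s.one ↔ s.le (s.neg x) y := by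
  show _ ↔ s.oplus (s.neg (s.neg x)) y = s.one
  rw [s.neg_neg]

lemma neg_le_of_oplus_eq_one {x y : A} (h : s.oplus x y = s.one) : s.le (s.neg y) x :=
  s.oplus_eq_one_iff.mp (by rwa [s.oplus_comm])

lemma oplus_eq_one_of_le {x y z : A} (hxy : s.le x y) (h : s.oplus x z = s.one) :
    s.oplus y z = s.one :=
  s.le_antisymm (s.le_one _) (h ▸ s.oplus_le_oplus_left hxy z)

lemma odot_oplus_neg_of_oplus_eq_one {x y : A} (h : s.oplus x y = s.one) :
    s.oplus (s.odot x y) (s.neg y) = x := by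
  exact s.sup_of_le_left (s.neg_le_of_oplus_eq_one h)

lemma oplus_neg_neg_eq_one_iff {x y : A} :
    s.oplus (s.neg x) (s.neg y) = s.one ↔ s.odot x y = s.zero := by
  refine ⟨fun h => ?_, fun h => ?_⟩
  · change s.neg _ = _
    rw [h, s.neg_one]
  · have h' := congrArg s.neg h
    rw [s.neg_odot] at h'
    exact h'

lemma eq_neg_of_odot_eq_zero {x y : A} (h₀ : s.odot x y = s.zero) (h₁ : s.oplus x y = s.one) :
    y = s.neg x := by
  have hle : s.le y (s.neg x) := by
    have h := s.neg_le_neg (s.oplus_eq_one_iff.mp (s.oplus_neg_neg_eq_one_iff.mpr h₀))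
    rwa [s.neg_neg, s.neg_neg] at h
  exact s.le_antisymm hle (s.oplus_eq_one_iff.mp h₁)

lemma oplus_odot_eq_one {a b c : A} (h₁ : s.oplus a b = s.one)
    (h₂ : s.oplus (s.odot a b) c = s.one) : s.oplus a (s.odot b c) = s.one := by
  have hc : s.le (s.oplus (s.neg b) (s.neg a)) c := by
    rw [s.oplus_comm, ← s.neg_odot]; exact s.oplus_eq_one_iff.mp h₂
  have h := s.odot_le_odot_right hc b
  rw [s.odot_inf, s.inf_of_le_left (s.oplus_eq_one_iff.mp h₁)] at h
  exact s.oplus_eq_one_iff.mpr h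

structure IsIdeal (P : Set A) : Prop where
  zero_mem : s.zero ∈ P
  oplus_mem : ∀ x ∈ P, ∀ y ∈ P, s.oplus x y ∈ P
  mem_of_le : ∀ x ∈ P, ∀ y, s.le y x → y ∈ P

def idealInsert (P : Set A) (a : A) : Set A :=
  {z | ∃ b ∈ P, ∃ n, s.le z (s.oplus b (s.nsmul n a))}

variable {s} {P : Set A}

lemma IsIdeal.idealInsert (hP : s.IsIdeal P) (a : A) : s.IsIdeal (s.idealInsert P a) where
  zero_mem := ⟨s.zero, hP.zero_mem, 0, s.zero_le _⟩
  oplus_mem := by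
    rintro x ⟨b₁, hb₁, m, hm⟩ y ⟨b₂, hb₂, n, hn⟩
    refine ⟨s.oplus b₁ b₂, hP.oplus_mem b₁ hb₁ b₂ hb₂, m + n, ?_⟩
    rw [s.nsmul_add, ← s.oplus_oplus_oplus_comm]
    exact s.oplus_le_oplus hm hn
  mem_of_le := by
    rintro x ⟨b, hb, n, hn⟩ y hy
    exact ⟨b, hb, n, s.le_trans hy hn⟩

lemma subset_idealInsert (a : A) : P ⊆ s.idealInsert P a := fun z hz =>
  ⟨z, hz, 0, by rw [s.nsmul_zero, s.oplus_zero]; exact s.le_refl _⟩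

lemma IsIdeal.mem_idealInsert (hP : s.IsIdeal P) (a : A) : a ∈ s.idealInsert P a :=
  ⟨s.zero, hP.zero_mem, 1, by
    rw [s.nsmul_succ, s.nsmul_zero, s.oplus_zero, s.zero_oplus]; exact s.le_refl _⟩

lemma IsIdeal.one_notMem (hP : s.IsIdeal P) {z : A} (hz : z ∉ P) : s.one ∉ P :=
  fun h => hz (hP.mem_of_le _ h z (s.le_one z))

lemma isIdeal_sUnion_of_isChain {c : Set (Set A)} (hc : ∀ P ∈ c, s.IsIdeal P)
    (hchain : IsChain (· ⊆ ·) c) (hne : c.Nonempty) : s.IsIdeal (⋃₀ c) where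
  zero_mem := let ⟨P, hP⟩ := hne; ⟨P, hP, (hc P hP).zero_mem⟩
  oplus_mem := by
    rintro x ⟨P, hP, hx⟩ y ⟨Q, hQ, hy⟩
    rcases hchain.total hP hQ with h | h
    · exact ⟨Q, hQ, (hc Q hQ).oplus_mem x (h hx) y hy⟩
    · exact ⟨P, hP, (hc P hP).oplus_mem x hx y (h hy)⟩
  mem_of_le := by
    rintro x ⟨P, hP, hx⟩ y hy
    exact ⟨P, hP, (hc P hP).mem_of_le x hx y hy⟩

variable (s) in
/-- An ideal maximal among those avoiding `z` is prime: if neither `x ⊖ y` nor `y ⊖ x` were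
in it, `z` would lie below both `b₁ ⊕ m(x ⊖ y)` and `b₂ ⊕ n(y ⊖ x)`, whose meet is at most
`b₁ ⊕ b₂` because `(x ⊖ y) ∧ (y ⊖ x) = 0`. -/
theorem exists_prime_ideal_notMem {z : A} (hz : z ≠ s.zero) :
    ∃ P : Set A, s.IsIdeal P ∧ z ∉ P ∧ ∀ x y, s.ominus x y ∈ P ∨ s.ominus y x ∈ P := by
  have hzero : s.IsIdeal {s.zero} :=
    ⟨rfl, by rintro x rfl y rfl; exact s.oplus_zero _,
      by rintro x rfl y hy; exact s.le_antisymm hy (s.zero_le y)⟩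
  obtain ⟨P, -, ⟨hP, hzP⟩, hmax⟩ := zorn_subset_nonempty {P | s.IsIdeal P ∧ z ∉ P}
    (fun c hc hchain hne => ⟨⋃₀ c,
      ⟨isIdeal_sUnion_of_isChain (fun P hP => (hc hP).1) hchain hne,
        fun ⟨P, hP, hzP⟩ => (hc hP).2 hzP⟩, fun _ => Set.subset_sUnion_of_mem⟩)
    {s.zero} ⟨hzero, hz⟩
  refine ⟨P, hP, hzP, fun x y => ?_⟩
  by_contra! hxy
  have below : ∀ a ∉ P, z ∈ s.idealInsert P a := fun a ha => by
    by_contra hza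
    exact ha (hmax ⟨hP.idealInsert a, hza⟩ (subset_idealInsert a) (hP.mem_idealInsert a))
  obtain ⟨b₁, hb₁, m, hm⟩ := below _ hxy.1
  obtain ⟨b₂, hb₂, n, hn⟩ := below _ hxy.2
  have hz_le : s.le z (s.oplus (s.oplus b₁ b₂) s.zero) := by
    rw [← s.inf_nsmul_nsmul_eq_zero (s.inf_ominus_ominus_self x y) m n, s.oplus_inf]
    exact s.le_inf (s.le_trans hm (s.oplus_le_oplus_left (s.le_oplus_left b₁ b₂) _))
      (s.le_trans hn (s.oplus_le_oplus_left (s.le_oplus_right b₂ b₁) _))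
  rw [s.oplus_zero] at hz_le
  exact hzP (hP.mem_of_le _ (hP.oplus_mem b₁ hb₁ b₂ hb₂) z hz_le)

variable (s) in
def idealSetoid (hP : s.IsIdeal P) : Setoid A where
  r x y := s.dist x y ∈ P
  iseqv.refl x := by rw [s.dist_self]; exact hP.zero_mem
  iseqv.symm h := by rwa [s.dist_comm]
  iseqv.trans {x y z} hxy hyz :=
    hP.mem_of_le _ (hP.oplus_mem _ hxy _ hyz) _ (s.dist_triangle x y z)

variable (s) in
def quotientMV (hP : s.IsIdeal P) : MVStr (Quotient (s.idealSetoid hP)) where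
  oplus := Quotient.map₂ s.oplus fun a c hac b d hbd => by
    have hcb := s.dist_oplus_le b d c
    rw [s.oplus_comm b c, s.oplus_comm d c] at hcb
    exact hP.mem_of_le _ (hP.oplus_mem _ hac _ hbd) _ (s.le_trans
      (s.dist_triangle _ (s.oplus c b) _) (s.oplus_le_oplus (s.dist_oplus_le a c b) hcb))
  neg := Quotient.map s.neg fun a b (hab : s.dist a b ∈ P) => by
    change s.dist (s.neg a) (s.neg b) ∈ P
    rwa [s.dist_neg]
  zero := Quotient.mk _ s.zero
  oplus_comm := by rintro ⟨a⟩ ⟨b⟩; exact congrArg (Quotient.mk _) (s.oplus_comm a b)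
  oplus_assoc := by rintro ⟨a⟩ ⟨b⟩ ⟨c⟩; exact congrArg (Quotient.mk _) (s.oplus_assoc a b c)
  oplus_zero := by rintro ⟨a⟩; exact congrArg (Quotient.mk _) (s.oplus_zero a)
  neg_neg := by rintro ⟨a⟩; exact congrArg (Quotient.mk _) (s.neg_neg a)
  oplus_one := by rintro ⟨a⟩; exact congrArg (Quotient.mk _) (s.oplus_one a)
  mv6 := by rintro ⟨a⟩ ⟨b⟩; exact congrArg (Quotient.mk _) (s.mv6 a b)

lemma IsIdeal.isMVHom_mk (hP : s.IsIdeal P) : IsMVHom s (s.quotientMV hP) (Quotient.mk _) :=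
  ⟨fun _ _ => rfl, fun _ => rfl, rfl⟩

lemma IsIdeal.mk_eq_mk_iff (hP : s.IsIdeal P) {a b : A} :
    Quotient.mk (s.idealSetoid hP) a = Quotient.mk _ b ↔ s.dist a b ∈ P :=
  Quotient.eq

lemma IsIdeal.quotientMV_le_mk_iff (hP : s.IsIdeal P) (a b : A) :
    (s.quotientMV hP).le (Quotient.mk _ a) (Quotient.mk _ b) ↔ s.ominus a b ∈ P := by
  change Quotient.mk _ (s.oplus (s.neg a) b) = Quotient.mk _ s.one ↔ _
  rw [hP.mk_eq_mk_iff, s.dist_one]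
  rfl

lemma IsIdeal.quotientMV_linear (hP : s.IsIdeal P)
    (hprime : ∀ x y, s.ominus x y ∈ P ∨ s.ominus y x ∈ P) : (s.quotientMV hP).Linear := by
  rintro ⟨a⟩ ⟨b⟩
  exact (hprime a b).imp (hP.quotientMV_le_mk_iff a b).mpr (hP.quotientMV_le_mk_iff b a).mpr

lemma IsIdeal.quotientMV_zero_ne_one (hP : s.IsIdeal P) (hone : s.one ∉ P) :
    (s.quotientMV hP).zero ≠ (s.quotientMV hP).one := by
  change Quotient.mk _ s.zero ≠ Quotient.mk _ s.one
  rw [Ne, hP.mk_eq_mk_iff, s.dist_one]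
  exact hone

/-- Chang's subdirect representation theorem. -/
theorem exists_isMVHom_linear_separating {M : Type u} (s : MVStr M) {a b : M} (hab : a ≠ b) :
    ∃ (C : Type u) (t : MVStr C) (q : M → C),
      IsMVHom s t q ∧ t.Linear ∧ t.zero ≠ t.one ∧ q a ≠ q b := by
  obtain ⟨P, hP, hdist, hprime⟩ :=
    s.exists_prime_ideal_notMem fun h => hab (s.eq_of_dist_eq_zero h)
  exact ⟨_, s.quotientMV hP, Quotient.mk _, hP.isMVHom_mk, hP.quotientMV_linear hprime,
    hP.quotientMV_zero_ne_one (hP.one_notMem hdist), fun h => hdist (hP.mk_eq_mk_iff.mp h)⟩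

end MVStr

namespace MVStr.Linear

variable {A : Type*} {s : MVStr A} (lin : s.Linear)
include lin

lemma le_neg_of_oplus_ne_one {x y : A} (h : s.oplus x y ≠ s.one) : s.le x (s.neg y) := by
  have hyx : s.le y (s.neg x) :=
    (lin (s.neg x) y).resolve_left fun hl => h (s.oplus_eq_one_iff.mpr hl)
  simpa only [s.neg_neg] using s.neg_le_neg hyx

lemma odot_eq_zero_of_oplus_ne_one {x y : A} (h : s.oplus x y ≠ s.one) :
    s.odot x y = s.zero := by
  change s.neg (s.oplus (s.neg x) (s.neg y)) = s.zero
  rw [show s.oplus (s.neg x) (s.neg y) = s.one from lin.le_neg_of_oplus_ne_one h, s.neg_one]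

lemma ominus_oplus_of_oplus_ne_one {x y : A} (h : s.oplus x y ≠ s.one) :
    s.ominus (s.oplus x y) y = x := by
  rw [s.oplus_comm x y, s.ominus_oplus y x]
  exact s.inf_of_le_left (lin.le_neg_of_oplus_ne_one h)

lemma neg_oplus_oplus_of_oplus_ne_one {x y : A} (h : s.oplus x y ≠ s.one) :
    s.oplus (s.neg (s.oplus x y)) y = s.neg x := by
  simpa only [MVStr.ominus, s.neg_neg] using congrArg s.neg (lin.ominus_oplus_of_oplus_ne_one h)

lemma eq_of_oplus_eq_of_oplus_eq {x y z w : A} (hx : s.oplus x z = w) (hy : s.oplus y z = w)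
    (hw : w ≠ s.one) : x = y := by
  rw [← lin.ominus_oplus_of_oplus_ne_one (hx ▸ hw : s.oplus x z ≠ s.one),
    ← lin.ominus_oplus_of_oplus_ne_one (hy ▸ hw : s.oplus y z ≠ s.one), hx, hy]

lemma oplus_odot_assoc {a b c : A} (h₁ : s.oplus a b ≠ s.one)
    (h₂ : s.oplus (s.oplus a b) c = s.one) (h₃ : s.oplus b c = s.one) :
    s.odot (s.oplus a b) c = s.oplus a (s.odot b c) :=
  lin.eq_of_oplus_eq_of_oplus_eq (s.odot_oplus_neg_of_oplus_eq_one h₂)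
    (by rw [← s.oplus_assoc, s.odot_oplus_neg_of_oplus_eq_one h₃]) h₁

lemma oplus_odot_eq_odot_oplus {a b c : A} (h₁ : s.oplus a b ≠ s.one)
    (h₂ : s.oplus (s.oplus a b) c = s.one) (h₃ : s.oplus b c ≠ s.one) :
    s.odot (s.oplus a b) c = s.odot a (s.oplus b c) := by
  have hneg_c : s.neg c = s.oplus (s.neg (s.oplus b c)) b := by
    rw [s.oplus_comm b c] at h₃ ⊢
    exact (lin.neg_oplus_oplus_of_oplus_ne_one h₃).symm
  refine lin.eq_of_oplus_eq_of_oplus_eq (s.odot_oplus_neg_of_oplus_eq_one h₂) ?_ h₁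
  rw [hneg_c, s.oplus_assoc, s.odot_oplus_neg_of_oplus_eq_one (by rwa [s.oplus_assoc])]

lemma odot_oplus_assoc {a b c : A} (h₁ : s.oplus a b = s.one) (h₂ : s.oplus b c ≠ s.one) :
    s.oplus (s.odot a b) c = s.odot a (s.oplus b c) := by
  by_cases ha : a = s.one
  · subst ha; rw [s.one_odot, s.one_odot]
  have hbc : s.oplus c (s.neg (s.oplus b c)) = s.neg b := by
    rw [s.oplus_comm c]; exact lin.neg_oplus_oplus_of_oplus_ne_one h₂
  refine lin.eq_of_oplus_eq_of_oplus_eq (z := s.neg (s.oplus b c)) ?_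
    (s.odot_oplus_neg_of_oplus_eq_one (by rw [s.oplus_assoc, h₁, s.one_oplus])) ha
  rw [← s.oplus_assoc, hbc, s.odot_oplus_neg_of_oplus_eq_one h₁]

lemma odot_oplus_eq_oplus_odot {a b c : A} (h₁ : s.oplus a b = s.one)
    (h₂ : s.oplus (s.odot a b) c ≠ s.one) (h₃ : s.oplus b c = s.one) :
    s.oplus (s.odot a b) c = s.oplus a (s.odot b c) := by
  by_cases hab : s.odot a b = s.zero
  · obtain rfl := s.eq_neg_of_odot_eq_zero hab h₁
    have hc := s.odot_oplus_neg_of_oplus_eq_one (x := c) (y := s.neg a) (by rwa [s.oplus_comm])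
    rw [s.neg_neg] at hc
    rw [hab, s.zero_oplus, s.odot_comm, s.oplus_comm, hc]
  by_cases hbc : s.odot b c = s.zero
  · obtain rfl := s.eq_neg_of_odot_eq_zero hbc h₃
    rw [hbc, s.oplus_zero, s.odot_oplus_neg_of_oplus_eq_one h₁]
  -- the remaining case is the De Morgan dual of `oplus_odot_eq_odot_oplus`
  have h := lin.oplus_odot_eq_odot_oplus (a := s.neg a) (b := s.neg b) (c := s.neg c)
    (mt s.oplus_neg_neg_eq_one_iff.mp hab)
    (by rw [← s.neg_odot]
        exact s.oplus_neg_neg_eq_one_iff.mpr (lin.odot_eq_zero_of_oplus_ne_one h₂))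
    (mt s.oplus_neg_neg_eq_one_iff.mp hbc)
  apply s.neg_inj
  rw [← s.odot_neg_neg, ← s.odot_neg_neg, s.neg_odot, s.neg_odot, h]

end MVStr.Linear

namespace MVStr

variable {C : Type*} (t : MVStr C)

/-- Chang's group of an MV-chain: `⟨n, c, _⟩` stands for `n + c`, the fractional part `c`
ranging over `t` minus its top element. -/
@[ext]
structure ChangGroup where
  int : ℤ
  frac : C
  frac_ne_one : frac ≠ t.one

namespace ChangGroup

variable {t}

open scoped Classical in
noncomputable def add (x y : ChangGroup t) : ChangGroup t :=
  if h : t.oplus x.frac y.frac = t.one then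
    ⟨x.int + y.int + 1, t.odot x.frac y.frac, t.odot_ne_one x.frac_ne_one _⟩
  else ⟨x.int + y.int, t.oplus x.frac y.frac, h⟩

open scoped Classical in
noncomputable def neg (x : ChangGroup t) : ChangGroup t :=
  if h : x.frac = t.zero then ⟨-x.int, x.frac, x.frac_ne_one⟩
  else ⟨-x.int - 1, t.neg x.frac, fun h1 => h (by rw [← t.neg_neg x.frac, h1, t.neg_one])⟩

noncomputable instance : Add (ChangGroup t) := ⟨add⟩

noncomputable instance : Neg (ChangGroup t) := ⟨neg⟩

instance [Fact (t.zero ≠ t.one)] : Zero (ChangGroup t) := ⟨⟨0, t.zero, Fact.out⟩⟩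

instance : LE (ChangGroup t) :=
  ⟨fun x y => x.int < y.int ∨ (x.int = y.int ∧ t.le x.frac y.frac)⟩

lemma add_of_oplus_eq_one {x y : ChangGroup t} (h : t.oplus x.frac y.frac = t.one) :
    x + y = ⟨x.int + y.int + 1, t.odot x.frac y.frac, t.odot_ne_one x.frac_ne_one _⟩ :=
  dif_pos h

lemma add_of_oplus_ne_one {x y : ChangGroup t} (h : t.oplus x.frac y.frac ≠ t.one) :
    x + y = ⟨x.int + y.int, t.oplus x.frac y.frac, h⟩ :=
  dif_neg h

lemma add_def (x y : ChangGroup t) : x + y = add x y := rfl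

protected lemma add_comm (x y : ChangGroup t) : x + y = y + x := by
  by_cases h : t.oplus x.frac y.frac = t.one
  · have h' : t.oplus y.frac x.frac = t.one := by rwa [t.oplus_comm]
    rw [add_of_oplus_eq_one h, add_of_oplus_eq_one h']
    ext
    · simp only; omega
    · exact t.odot_comm _ _
  · have h' : t.oplus y.frac x.frac ≠ t.one := by rwa [t.oplus_comm]
    rw [add_of_oplus_ne_one h, add_of_oplus_ne_one h']
    ext
    · simp only; omega
    · exact t.oplus_comm _ _

/-- The six cases are the possible patterns of carries on the two sides. -/
protected lemma add_assoc [Fact t.Linear] (x y z : ChangGroup t) : x + y + z = x + (y + z) := by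
  have lin : t.Linear := Fact.out
  obtain ⟨m, a, ha⟩ := x
  obtain ⟨n, b, hb⟩ := y
  obtain ⟨p, c, hc⟩ := z
  by_cases h₁ : t.oplus a b = t.one
  · by_cases h₂ : t.oplus (t.odot a b) c = t.one
    · have h₃ : t.oplus b c = t.one := t.oplus_eq_one_of_le (t.odot_le_right a b) h₂
      have h₄ : t.oplus a (t.odot b c) = t.one := t.oplus_odot_eq_one h₁ h₂
      simp only [add_def, add, dif_pos h₁, dif_pos h₂, dif_pos h₃, dif_pos h₄]
      exact ChangGroup.ext (by dsimp only; omega) (t.odot_assoc a b c)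
    by_cases h₃ : t.oplus b c = t.one
    · have heq := lin.odot_oplus_eq_oplus_odot h₁ h₂ h₃
      have h₄ : t.oplus a (t.odot b c) ≠ t.one := heq ▸ h₂
      simp only [add_def, add, dif_pos h₁, dif_neg h₂, dif_pos h₃, dif_neg h₄]
      exact ChangGroup.ext (by dsimp only; omega) heq
    · have h₄ : t.oplus a (t.oplus b c) = t.one := by rw [t.oplus_assoc, h₁, t.one_oplus]
      simp only [add_def, add, dif_pos h₁, dif_neg h₂, dif_neg h₃, dif_pos h₄]
      exact ChangGroup.ext (by dsimp only; omega) (lin.odot_oplus_assoc h₁ h₃)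
  · by_cases h₂ : t.oplus (t.oplus a b) c = t.one
    · by_cases h₃ : t.oplus b c = t.one
      · have h₄ : t.oplus a (t.odot b c) ≠ t.one := fun h => h₁ <| by
          rw [t.oplus_comm] at h ⊢; exact t.oplus_eq_one_of_le (t.odot_le_left b c) h
        simp only [add_def, add, dif_neg h₁, dif_pos h₂, dif_pos h₃, dif_neg h₄]
        exact ChangGroup.ext (by dsimp only; omega) (lin.oplus_odot_assoc h₁ h₂ h₃)
      · have h₄ : t.oplus a (t.oplus b c) = t.one := by rwa [t.oplus_assoc]
        simp only [add_def, add, dif_neg h₁, dif_pos h₂, dif_neg h₃, dif_pos h₄]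
        exact ChangGroup.ext (by dsimp only; omega) (lin.oplus_odot_eq_odot_oplus h₁ h₂ h₃)
    · have h₃ : t.oplus b c ≠ t.one := fun h => h₂ (t.oplus_eq_one_of_le (t.le_oplus_right b a) h)
      have h₄ : t.oplus a (t.oplus b c) ≠ t.one := by rwa [t.oplus_assoc]
      simp only [add_def, add, dif_neg h₁, dif_neg h₂, dif_neg h₃, dif_neg h₄]
      exact ChangGroup.ext (by dsimp only; omega) (t.oplus_assoc a b c).symm

protected lemma le_refl (x : ChangGroup t) : x ≤ x := Or.inr ⟨rfl, t.le_refl _⟩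

protected lemma le_trans {x y z : ChangGroup t} : x ≤ y → y ≤ z → x ≤ z := by
  rintro (h | ⟨h, h'⟩) (g | ⟨g, g'⟩)
  · exact Or.inl (by omega)
  · exact Or.inl (by omega)
  · exact Or.inl (by omega)
  · exact Or.inr ⟨by omega, t.le_trans h' g'⟩

protected lemma le_antisymm {x y : ChangGroup t} : x ≤ y → y ≤ x → x = y := by
  rintro (h | ⟨h, h'⟩) (g | ⟨g, g'⟩)
  · omega
  · omega
  · omega
  · exact ChangGroup.ext h (t.le_antisymm h' g')

protected lemma le_total [Fact t.Linear] (x y : ChangGroup t) : x ≤ y ∨ y ≤ x := by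
  rcases lt_trichotomy x.int y.int with h | h | h
  · exact Or.inl (Or.inl h)
  · exact (Fact.out (p := t.Linear) x.frac y.frac).imp (fun h' => Or.inr ⟨h, h'⟩)
      (fun h' => Or.inr ⟨h.symm, h'⟩)
  · exact Or.inr (Or.inl h)

protected lemma add_le_add_left {x y : ChangGroup t} (h : x ≤ y) (z : ChangGroup t) :
    z + x ≤ z + y := by
  simp only [add_def, add]
  rcases h with h | ⟨h, hab⟩
  · split_ifs with c₁ c₂ c₂
    · exact Or.inl (by dsimp only; omega)
    · rcases (show z.int + x.int + 1 ≤ z.int + y.int by omega).eq_or_lt with he | hl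
      · exact Or.inr ⟨he, t.le_trans (t.odot_le_left _ _) (t.le_oplus_left _ _)⟩
      · exact Or.inl hl
    · exact Or.inl (by dsimp only; omega)
    · exact Or.inl (by dsimp only; omega)
  · have hcarry : t.oplus z.frac x.frac = t.one → t.oplus z.frac y.frac = t.one := by
      rw [t.oplus_comm z.frac, t.oplus_comm z.frac]; exact t.oplus_eq_one_of_le hab
    split_ifs with c₁ c₂ c₂
    · exact Or.inr ⟨by dsimp only; omega, t.odot_le_odot_right hab z.frac⟩
    · exact absurd (hcarry c₁) c₂
    · exact Or.inl (by dsimp only; omega)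
    · exact Or.inr ⟨by dsimp only; omega, t.oplus_le_oplus_right hab z.frac⟩

variable [Fact (t.zero ≠ t.one)]

lemma zero_def : (0 : ChangGroup t) = ⟨0, t.zero, Fact.out⟩ := rfl

protected lemma add_zero (x : ChangGroup t) : x + 0 = x := by
  have h : t.oplus x.frac t.zero ≠ t.one := by rw [t.oplus_zero]; exact x.frac_ne_one
  rw [add_of_oplus_ne_one (y := 0) h]
  ext
  · exact add_zero _
  · exact t.oplus_zero _

protected lemma neg_add_cancel (x : ChangGroup t) : -x + x = 0 := by
  by_cases h : x.frac = t.zero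
  · have hn : -x = ⟨-x.int, x.frac, x.frac_ne_one⟩ := dif_pos h
    have hc : t.oplus (-x).frac x.frac ≠ t.one := by
      rw [hn, h, t.oplus_zero]; exact Fact.out
    rw [add_of_oplus_ne_one hc, zero_def]
    ext
    · simp only [hn]; omega
    · simp only [hn, h, t.oplus_zero]
  · have hn : -x = ⟨-x.int - 1, t.neg x.frac, _⟩ := dif_neg h
    have hc : t.oplus (-x).frac x.frac = t.one := by rw [hn]; exact t.neg_oplus_self _
    rw [add_of_oplus_eq_one hc, zero_def]
    ext
    · simp only [hn]; omega
    · simp only [hn, t.odot_comm, t.odot_neg_self]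

variable (t) in
/-- The embedding of `t` as the unit interval `[0, 1]` of its Chang group. -/
noncomputable def emb (c : C) : ChangGroup t :=
  open scoped Classical in
  if h : c = t.one then ⟨1, t.zero, Fact.out⟩ else ⟨0, c, h⟩

lemma emb_of_ne_one {c : C} (h : c ≠ t.one) : emb t c = ⟨0, c, h⟩ := dif_neg h

lemma emb_one : emb t t.one = ⟨1, t.zero, Fact.out⟩ := dif_pos rfl

lemma emb_zero : emb t t.zero = 0 := emb_of_ne_one Fact.out

lemma emb_injective : Function.Injective (emb t) := by
  intro x y h
  by_cases hx : x = t.one <;> by_cases hy : y = t.one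
  · rw [hx, hy]
  · rw [hx, emb_one, emb_of_ne_one hy] at h; simpa using congrArg int h
  · rw [hy, emb_one, emb_of_ne_one hx] at h; simpa using congrArg int h
  · rw [emb_of_ne_one hx, emb_of_ne_one hy] at h; exact congrArg frac h

variable [Fact t.Linear]

noncomputable instance : AddCommGroup (ChangGroup t) where
  add_assoc := ChangGroup.add_assoc
  zero_add x := ChangGroup.add_comm _ x ▸ ChangGroup.add_zero x
  add_zero := ChangGroup.add_zero
  neg_add_cancel := ChangGroup.neg_add_cancel
  add_comm := ChangGroup.add_comm
  nsmul := nsmulRec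
  zsmul := zsmulRec

noncomputable instance : LinearOrder (ChangGroup t) where
  le_refl := ChangGroup.le_refl
  le_trans _ _ _ := ChangGroup.le_trans
  le_antisymm _ _ := ChangGroup.le_antisymm
  le_total := ChangGroup.le_total
  toDecidableLE := Classical.decRel _

instance : IsOrderedAddMonoid (ChangGroup t) where
  add_le_add_left _ _ h z := by
    rw [add_comm _ z, add_comm _ z]; exact ChangGroup.add_le_add_left h z

lemma emb_lt_emb {x y : C} (hxy : t.le x y) (hne : x ≠ y) : emb t x < emb t y := by
  have hx : x ≠ t.one := by
    rintro rfl; exact hne (t.le_antisymm hxy (t.le_one y))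
  refine lt_of_le_of_ne ?_ (emb_injective.ne hne)
  by_cases hy : y = t.one
  · rw [emb_of_ne_one hx, hy, emb_one]; exact Or.inl zero_lt_one
  · rw [emb_of_ne_one hx, emb_of_ne_one hy]; exact Or.inr ⟨rfl, hxy⟩

lemma emb_add_emb (x y : C) : emb t x + emb t y = emb t (t.oplus x y) + emb t (t.odot x y) := by
  by_cases hx : x = t.one
  · rw [hx, t.one_oplus, t.one_odot]
  by_cases hy : y = t.one
  · rw [hy, t.oplus_one', t.odot_one, add_comm]
  by_cases h : t.oplus x y = t.one
  · have hxy : t.odot x y ≠ t.one := t.odot_ne_one hx y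
    have hz : t.oplus t.zero (t.odot x y) ≠ t.one := by rwa [t.zero_oplus]
    rw [emb_of_ne_one hx, emb_of_ne_one hy, h, emb_one, emb_of_ne_one hxy,
      add_of_oplus_eq_one (x := ⟨0, x, hx⟩) (y := ⟨0, y, hy⟩) h,
      add_of_oplus_ne_one (x := ⟨1, t.zero, Fact.out⟩) (y := ⟨0, _, hxy⟩) hz]
    exact ChangGroup.ext rfl (t.zero_oplus _).symm
  · rw [(Fact.out : t.Linear).odot_eq_zero_of_oplus_ne_one h, emb_zero, add_zero,
      emb_of_ne_one hx, emb_of_ne_one hy, emb_of_ne_one h]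
    exact add_of_oplus_ne_one (x := ⟨0, x, hx⟩) (y := ⟨0, y, hy⟩) h

end ChangGroup

end MVStr

namespace HahnSeries

/-- Induction on `T`: if `γ` is the least order of an element of `T`, add a large multiple of
the `γ`-th coefficient to a map that is positive on the elements whose `γ`-th coefficient
vanishes. -/
theorem exists_addMonoidHom_pos {Γ : Type*} [LinearOrder Γ]
    (T : Finset (Lex ℝ⟦Γ⟧)) (hT : ∀ x ∈ T, 0 < x) :
    ∃ ψ : Lex ℝ⟦Γ⟧ →+ ℝ, ∀ x ∈ T, 0 < ψ x := by
  classical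
  induction T using Finset.strongInduction with
  | H T ih =>
  obtain rfl | hne := T.eq_empty_or_nonempty
  · exact ⟨0, by simp⟩
  obtain ⟨x₀, hx₀, hmin⟩ := T.exists_min_image (fun x => (ofLex x).orderTop) hne
  obtain ⟨γ, hγ⟩ := WithTop.ne_top_iff_exists.mp <| orderTop_ne_top.mpr <|
    leadingCoeff_ne_zero.mp (leadingCoeff_pos_iff.mpr (hT x₀ hx₀)).ne'
  let c : Lex ℝ⟦Γ⟧ →+ ℝ := AddMonoidHom.mk' (fun x => (ofLex x).coeff γ) fun _ _ => coeff_add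
  have hc_pos : ∀ x ∈ T, c x ≠ 0 → 0 < c x := by
    intro x hx hcx
    have hord : (ofLex x).orderTop = γ :=
      le_antisymm (orderTop_le_of_coeff_ne_zero hcx) (hγ ▸ hmin x hx)
    have hlead : (ofLex x).leadingCoeff = c x := by
      rw [leadingCoeff_of_ne_zero (orderTop_ne_top.mp (by simp [hord]))]
      congr 1
      simp [hord]
    exact hlead ▸ leadingCoeff_pos_iff.mpr (hT x hx)
  obtain ⟨ψ, hψ⟩ := ih (T.filter (c · = 0))
    (Finset.filter_ssubset.mpr ⟨x₀, hx₀, coeff_orderTop_ne hγ.symm⟩)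
    fun x hx => hT x (Finset.mem_of_mem_filter x hx)
  obtain ⟨K, hK⟩ := (T.image fun x => |ψ x| / c x).exists_le
  refine ⟨ψ + (K + 1) • c, fun x hx => ?_⟩
  by_cases hcx : c x = 0
  · simpa [hcx] using hψ x (Finset.mem_filter.mpr ⟨hx, hcx⟩)
  · have hpos := hc_pos x hx hcx
    have hψK : |ψ x| ≤ K * c x := (div_le_iff₀ hpos).mp (hK _ (Finset.mem_image_of_mem _ hx))
    simp only [AddMonoidHom.add_apply, AddMonoidHom.smul_apply, smul_eq_mul]
    nlinarith [neg_abs_le (ψ x)]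

end HahnSeries

theorem exists_addMonoidHom_real_pos {G : Type*} [AddCommGroup G] [LinearOrder G]
    [IsOrderedAddMonoid G] (S : Finset G) : ∃ φ : G →+ ℝ, ∀ g ∈ S, 0 < g → 0 < φ g := by
  classical
  obtain ⟨f, hf, -⟩ := hahnEmbedding_isOrderedAddMonoid G
  have hmono : StrictMono f := (OrderHomClass.monotone f).strictMono_of_injective hf
  obtain ⟨ψ, hψ⟩ := HahnSeries.exists_addMonoidHom_pos ((S.filter (0 < ·)).image f) <| by
    simp only [Finset.mem_image, Finset.mem_filter]
    rintro _ ⟨g, ⟨-, hg⟩, rfl⟩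
    simpa using hmono hg
  exact ⟨ψ.comp (f : G →+ _), fun g hg hpos =>
    hψ _ (Finset.mem_image_of_mem _ (Finset.mem_filter.mpr ⟨hg, hpos⟩))⟩

/-- `IsPartialMVEmbedding s t X f` is by definition `Set.InjOn f X ∧ IsPartialMVHom s t X f`. -/
def IsPartialMVHom {A B : Type*} (s : MVStr A) (t : MVStr B) (X : Set A) (f : A → B) : Prop :=
  (s.zero ∈ X → f s.zero = t.zero) ∧
  (∀ x ∈ X, s.neg x ∈ X → f (s.neg x) = t.neg (f x)) ∧
  (∀ x ∈ X, ∀ y ∈ X, s.oplus x y ∈ X → f (s.oplus x y) = t.oplus (f x) (f y))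

namespace IsPartialMVHom

variable {A B D : Type*} {s : MVStr A} {t : MVStr B} {u : MVStr D}

lemma mono {X Y : Set A} {f : A → B} (hf : IsPartialMVHom s t Y f) (hXY : X ⊆ Y) :
    IsPartialMVHom s t X f :=
  ⟨fun h => hf.1 (hXY h), fun x hx hnx => hf.2.1 x (hXY hx) (hXY hnx),
    fun x hx y hy hxy => hf.2.2 x (hXY hx) y (hXY hy) (hXY hxy)⟩

lemma comp_isMVHom {X : Set A} {q : A → B} {g : B → D} (hg : IsPartialMVHom t u (q '' X) g)
    (hq : IsMVHom s t q) : IsPartialMVHom s u X (g ∘ q) := by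
  obtain ⟨hq_oplus, hq_neg, hq_zero⟩ := hq
  refine ⟨fun h => ?_, fun x hx hnx => ?_, fun x hx y hy hxy => ?_⟩
  · simp only [Function.comp_apply, hq_zero]
    exact hg.1 (hq_zero ▸ Set.mem_image_of_mem q h)
  · simp only [Function.comp_apply, hq_neg]
    exact hg.2.1 _ (Set.mem_image_of_mem q hx) (hq_neg x ▸ Set.mem_image_of_mem q hnx)
  · simp only [Function.comp_apply, hq_oplus]
    exact hg.2.2 _ (Set.mem_image_of_mem q hx) _ (Set.mem_image_of_mem q hy)
      (hq_oplus x y ▸ Set.mem_image_of_mem q hxy)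

end IsPartialMVHom

namespace MVStr.Linear

variable {C : Type*} {t : MVStr C} (lin : t.Linear)
include lin

theorem isPartialMVEmbedding_projIcc {X : Set C} {r : C → ℝ} (hr₀ : r t.zero = 0)
    (hr₁ : r t.one = 1) (hr_add : ∀ x y, r x + r y = r (t.oplus x y) + r (t.odot x y))
    (hr_mem : ∀ x ∈ X, r x ∈ Set.Icc 0 1) (hr_odot : ∀ x ∈ X, ∀ y ∈ X, 0 ≤ r (t.odot x y))
    (hr_lt : ∀ x ∈ X, ∀ y ∈ X, t.le x y → x ≠ y → r x < r y) :
    IsPartialMVEmbedding t stdMV X fun x => Set.projIcc 0 1 zero_le_one (r x) := by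
  have hval : ∀ x ∈ X, (Set.projIcc 0 1 zero_le_one (r x) : ℝ) = r x := fun x hx => by
    rw [Set.projIcc_of_mem _ (hr_mem x hx)]
  have hr_neg : ∀ x, r (t.neg x) = 1 - r x := fun x => by
    have h := hr_add x (t.neg x)
    rw [t.oplus_neg_self, t.odot_neg_self, hr₁, hr₀] at h
    linarith
  refine ⟨fun x hx y hy hxy => ?_, fun _ => ?_, fun x hx hnx => ?_, fun x hx y hy hxy => ?_⟩
  · have hr : r x = r y := by rw [← hval x hx, ← hval y hy]; exact congrArg Subtype.val hxy
    by_contra hne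
    rcases lin x y with h | h
    · exact (hr_lt x hx y hy h hne).ne hr
    · exact (hr_lt y hy x hx h (Ne.symm hne)).ne' hr
  · simp only [hr₀, Set.projIcc_left]
    rfl
  · apply Subtype.ext
    change _ = 1 - _
    rw [hval _ hnx, hval _ hx, hr_neg]
  · apply Subtype.ext
    change _ = min (_ + _) 1
    rw [hval _ hxy, hval _ hx, hval _ hy, hr_add x y]
    by_cases h : t.oplus x y = t.one
    · rw [h, hr₁]
      exact (min_eq_right (by linarith [hr_odot x hx y hy])).symm
    · rw [lin.odot_eq_zero_of_oplus_ne_one h, hr₀, add_zero]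
      exact (min_eq_left (hr_mem _ hxy).2).symm

theorem exists_isPartialMVEmbedding_of_emb {G : Type*} [AddCommGroup G] [LinearOrder G]
    [IsOrderedAddMonoid G] {ι : C → G} (hι₀ : ι t.zero = 0)
    (hι_add : ∀ x y, ι x + ι y = ι (t.oplus x y) + ι (t.odot x y))
    (hι_lt : ∀ x y, t.le x y → x ≠ y → ι x < ι y) (h01 : t.zero ≠ t.one) (X : Finset C) :
    ∃ f : C → Set.Icc (0 : ℝ) 1, IsPartialMVEmbedding t stdMV X f := by
  classical
  set Y : Finset C := X ∪ {t.zero, t.one} ∪ (X ×ˢ X).image fun p => t.odot p.1 p.2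
  have hXY : ∀ x ∈ X, x ∈ Y := fun x hx => by simp [Y, hx]
  have h0Y : t.zero ∈ Y := by simp [Y]
  have h1Y : t.one ∈ Y := by simp [Y]
  have hodotY : ∀ x ∈ X, ∀ y ∈ X, t.odot x y ∈ Y := fun x hx y hy => by
    simp only [Y, Finset.mem_union, Finset.mem_image, Finset.mem_product]
    exact Or.inr ⟨(x, y), ⟨hx, hy⟩, rfl⟩
  obtain ⟨φ, hφ⟩ := exists_addMonoidHom_real_pos ((Y ×ˢ Y).image fun p => ι p.2 - ι p.1)
  have hφ_lt : ∀ x ∈ Y, ∀ y ∈ Y, t.le x y → x ≠ y → φ (ι x) < φ (ι y) := by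
    intro x hx y hy hxy hne
    have h := hφ (ι y - ι x) (Finset.mem_image.mpr ⟨(x, y), Finset.mem_product.mpr ⟨hx, hy⟩, rfl⟩)
      (sub_pos.mpr (hι_lt x y hxy hne))
    rwa [map_sub, sub_pos] at h
  have hφ_le : ∀ x ∈ Y, ∀ y ∈ Y, t.le x y → φ (ι x) ≤ φ (ι y) := by
    intro x hx y hy hxy
    rcases eq_or_ne x y with rfl | hne
    · exact le_rfl
    · exact (hφ_lt x hx y hy hxy hne).le
  have hφ₀ : φ (ι t.zero) = 0 := by rw [hι₀, map_zero]
  have hu : 0 < φ (ι t.one) := hφ₀ ▸ hφ_lt _ h0Y _ h1Y (t.zero_le _) h01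
  have hnonneg : ∀ x ∈ Y, 0 ≤ φ (ι x) / φ (ι t.one) := fun x hx =>
    div_nonneg (hφ₀ ▸ hφ_le _ h0Y _ hx (t.zero_le x)) hu.le
  refine ⟨_, lin.isPartialMVEmbedding_projIcc (r := fun x => φ (ι x) / φ (ι t.one))
    (by simp only [hφ₀, zero_div]) (div_self hu.ne') (fun x y => ?_)
    (fun x hx => ⟨hnonneg x (hXY x hx), ?_⟩)
    (fun x hx y hy => hnonneg _ (hodotY x hx y hy))
    (fun x hx y hy hxy hne => div_lt_div_of_pos_right (hφ_lt x (hXY x hx) y (hXY y hy) hxy hne) hu)⟩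
  · rw [← add_div, ← add_div, ← map_add, ← map_add, hι_add]
  · exact (div_le_one hu).mpr (hφ_le _ (hXY x hx) _ h1Y (t.le_one x))

theorem exists_isPartialMVEmbedding (h01 : t.zero ≠ t.one) (X : Finset C) :
    ∃ f : C → Set.Icc (0 : ℝ) 1, IsPartialMVEmbedding t stdMV X f :=
  have : Fact t.Linear := ⟨lin⟩
  have : Fact (t.zero ≠ t.one) := ⟨h01⟩
  lin.exists_isPartialMVEmbedding_of_emb ChangGroup.emb_zero ChangGroup.emb_add_emb
    (fun _ _ => ChangGroup.emb_lt_emb) h01 X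

end MVStr.Linear

theorem MVStr.exists_isPartialMVHom_separating {M : Type u} (s : MVStr M) {a b : M} (hab : a ≠ b)
    (X : Finset M) :
    ∃ f : M → Set.Icc (0 : ℝ) 1, IsPartialMVHom s stdMV X f ∧ f a ≠ f b := by
  classical
  obtain ⟨C, t, q, hq, lin, h01, hqab⟩ := s.exists_isMVHom_linear_separating hab
  let X' : Finset M := insert a (insert b X)
  obtain ⟨g, hg_inj, hg⟩ := lin.exists_isPartialMVEmbedding h01 (X'.image q)
  rw [Finset.coe_image] at hg_inj hg
  refine ⟨g ∘ q, (IsPartialMVHom.comp_isMVHom hg hq).mono fun x hx => by simp [X', hx],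
    fun h => hqab (hg_inj ?_ ?_ h)⟩
  all_goals exact Set.mem_image_of_mem q (by simp [X'])

lemma IsMVHom.piMV {A I : Type*} {B : I → Type*} {s : MVStr A} {t : ∀ i, MVStr (B i)}
    {f : A → ∀ i, B i} (hf : ∀ i, IsMVHom s (t i) fun a => f a i) : IsMVHom s (piMV t) f :=
  ⟨fun x y => funext fun i => (hf i).1 x y, fun x => funext fun i => (hf i).2.1 x,
    funext fun i => (hf i).2.2⟩

theorem isMVHom_ultrapower_mk {M B : Type*} {s : MVStr M} {t : MVStr B}
    {F : Finset M → M → B} (hF : ∀ Y : Finset M, IsPartialMVHom s t Y (F Y)) :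
    IsMVHom s (ultraMV (fun _ => t) (Ultrafilter.of Filter.atTop))
      fun m => Quotient.mk (mvSetoid _ _) fun Y => F Y m := by
  classical
  have eventually_superset (Z : Finset M) :
      ∀ᶠ Y in ↑(Ultrafilter.of (Filter.atTop : Filter (Finset M))), Z ⊆ Y :=
    Ultrafilter.of_le _ (Filter.eventually_ge_atTop Z)
  refine ⟨fun x y => Quotient.sound ?_, fun x => Quotient.sound ?_, Quotient.sound ?_⟩
  · exact (eventually_superset {x, y, s.oplus x y}).mono fun Y hY =>
      (hF Y).2.2 x (hY (by simp)) y (hY (by simp)) (hY (by simp))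
  · exact (eventually_superset {x, s.neg x}).mono fun Y hY =>
      (hF Y).2.1 x (hY (by simp)) (hY (by simp))
  · exact (eventually_superset {s.zero}).mono fun Y hY => (hF Y).1 (hY (by simp))

lemma ultrapower_mk_ne {I B : Type*} {U : Ultrafilter I} {x y : I → B} (h : ∀ i, x i ≠ y i) :
    Quotient.mk (mvSetoid (fun _ => B) U) x ≠ Quotient.mk _ y := fun he => by
  have hmem : {i | x i = y i} ∈ (U : Filter I) := Quotient.exact he
  exact U.empty_notMem (Filter.mem_of_superset hmem fun i hi => h i hi)

/-- Di Nola's representation theorem: every MV-algebra embeds into a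
product of ultrapowers of the standard MV-algebra `[0,1]`. -/
theorem di_nola_representation {M : Type u} (s : MVStr M) :
    ∃ (J : Type u) (If : J → Type u) (U : ∀ j, Ultrafilter (If j))
      (f : M → ∀ j, MVUltra (fun _ : If j => ↥(Set.Icc (0 : ℝ) 1)) (U j)),
      IsMVHom s (piMV fun j => ultraMV (fun _ : If j => stdMV) (U j)) f ∧
      Function.Injective f := by
  choose F hF hF_ne using fun (j : {p : M × M // p.1 ≠ p.2}) (Y : Finset M) =>
    s.exists_isPartialMVHom_separating j.2 Y
  refine ⟨{p : M × M // p.1 ≠ p.2}, fun _ => Finset M, fun _ => Ultrafilter.of Filter.atTop,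
    fun m j => Quotient.mk _ fun Y => F j Y m,
    IsMVHom.piMV fun j => isMVHom_ultrapower_mk (hF j), fun m m' h => ?_⟩
  by_contra hne
  exact ultrapower_mk_ne (hF_ne ⟨(m, m'), hne⟩) (congrFun h ⟨(m, m'), hne⟩)
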